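/- arXiv:2204.04100 — 4 statements merged into one kernel-verified Lean document; each statement's English description precedes it below -/
import Mathlib

section
/- Let X be a normed space, q ∈ [1,2], and C_q > 0 such that for all finite sequences x₁, …, xₙ in X one has (2^{−n} Σ_{ε ∈ {−1,1}ⁿ} ‖Σᵢ εᵢxᵢ‖^q)^{1/q} ≤ C_q·(Σᵢ ‖xᵢ‖^q)^{1/q}. Then for all finite sequences x₁, …, xₙ in X one has (2^{−n} Σ_{ε ∈ {−1,1}ⁿ} ‖Σᵢ εᵢxᵢ‖²)^{1/2} ≤ K₂·C_q·(Σᵢ ‖xᵢ‖^q)^{1/q}, where K₂ := ((2·2−1)/(2−1))^{2−1} = 3. -/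
open Finset

/-- Random sign combination `∑ i, εᵢ • xᵢ` of a finite sequence, where the signs
are encoded by a Boolean vector (`true ↦ +1`, `false ↦ -1`). -/
noncomputable def signSum {X : Type*} [NormedAddCommGroup X] [NormedSpace ℝ X]
    {n : ℕ} (x : Fin n → X) (ε : Fin n → Bool) : X :=
  ∑ i, (if ε i then (1 : ℝ) else -1) • x i

lemma cube_var_bound : ∀ (n : ℕ) (f : (Fin n → Bool) → ℝ) (c : Fin n → ℝ),
    (∀ (ε : Fin n → Bool) (k : Fin n),
      |f (Function.update ε k (!(ε k))) - f ε| ≤ 2 * c k) →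
    (∑ ε, f ε ^ 2) / 2 ^ n ≤ ((∑ ε, f ε) / 2 ^ n) ^ 2 + ∑ k, c k ^ 2 := by
  intro n
  induction n with
  | zero =>
      intro f c _
      rw [Fintype.sum_unique (fun ε => f ε ^ 2), Fintype.sum_unique f]
      simp
  | succ n ih =>
      intro f c hflip
      have hsum : ∀ (g : (Fin (n+1) → Bool) → ℝ),
          ∑ ε, g ε = ∑ ε' : Fin n → Bool, (g (Fin.cons true ε') + g (Fin.cons false ε')) := by
        intro g
        rw [← (Fin.consEquiv (fun _ : Fin (n+1) => Bool)).sum_comp]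
        rw [Fintype.sum_prod_type]
        simp [Fin.consEquiv, Fintype.sum_bool, Finset.sum_add_distrib]
      obtain ⟨g, hg⟩ : ∃ g : (Fin n → Bool) → ℝ,
          ∀ ε', g ε' = (f (Fin.cons true ε') + f (Fin.cons false ε')) / 2 :=
        ⟨_, fun _ => rfl⟩
      have hmean : (∑ ε, f ε) / 2 ^ (n+1) = (∑ ε', g ε') / 2 ^ n := by
        rw [hsum f]
        have : ∑ ε' : Fin n → Bool, (f (Fin.cons true ε') + f (Fin.cons false ε'))
            = ∑ ε', 2 * g ε' := by
          apply Finset.sum_congr rfl; intro ε' _; rw [hg ε']; ring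
        rw [this, ← Finset.mul_sum]
        ring
      have hflipg : ∀ (ε' : Fin n → Bool) (k : Fin n),
          |g (Function.update ε' k (!(ε' k))) - g ε'| ≤ 2 * c k.succ := by
        intro ε' k
        have h1 : ∀ b : Bool,
            |f (Fin.cons b (Function.update ε' k (!(ε' k)))) - f (Fin.cons b ε')| ≤ 2 * c k.succ := by
          intro b
          have := hflip (Fin.cons b ε') k.succ
          rwa [Fin.cons_succ, ← Fin.cons_update] at this
        have ht := h1 true
        have hf := h1 false
        rw [hg, hg, div_sub_div_same, abs_div]
        rw [show f (Fin.cons true (Function.update ε' k (!(ε' k)))) +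
              f (Fin.cons false (Function.update ε' k (!(ε' k)))) -
              (f (Fin.cons true ε') + f (Fin.cons false ε'))
            = (f (Fin.cons true (Function.update ε' k (!(ε' k)))) - f (Fin.cons true ε')) +
              (f (Fin.cons false (Function.update ε' k (!(ε' k)))) - f (Fin.cons false ε')) by ring]
        have habs := abs_add_le
          (f (Fin.cons true (Function.update ε' k (!(ε' k)))) - f (Fin.cons true ε'))
          (f (Fin.cons false (Function.update ε' k (!(ε' k)))) - f (Fin.cons false ε'))
        have h2 : |(2:ℝ)| = 2 := by norm_num
        rw [h2]
        calc _ ≤ (|f (Fin.cons true (Function.update ε' k (!(ε' k)))) - f (Fin.cons true ε')| +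
              |f (Fin.cons false (Function.update ε' k (!(ε' k)))) - f (Fin.cons false ε')|) / 2 := by
                apply div_le_div_of_nonneg_right habs (by norm_num)
          _ ≤ (2 * c k.succ + 2 * c k.succ) / 2 := by
                apply div_le_div_of_nonneg_right (add_le_add ht hf) (by norm_num)
          _ = 2 * c k.succ := by ring
      have hd : ∀ ε' : Fin n → Bool,
          (f (Fin.cons true ε') - f (Fin.cons false ε')) ^ 2 ≤ (2 * c 0) ^ 2 := by
        intro ε'
        have := hflip (Fin.cons true ε') 0
        rw [Fin.cons_zero] at this
        rw [Fin.update_cons_zero] at this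
        have habs : |f (Fin.cons true ε') - f (Fin.cons false ε')| ≤ 2 * c 0 := by
          rw [← abs_sub_comm] at this; simpa using this
        calc (f (Fin.cons true ε') - f (Fin.cons false ε')) ^ 2
            = |f (Fin.cons true ε') - f (Fin.cons false ε')| ^ 2 := (sq_abs _).symm
          _ ≤ (2 * c 0) ^ 2 := by
              apply pow_le_pow_left₀ (abs_nonneg _) habs
      have hsq : (∑ ε, f ε ^ 2) / 2 ^ (n+1) ≤ (∑ ε', g ε' ^ 2) / 2 ^ n + c 0 ^ 2 := by
        rw [hsum (fun ε => f ε ^ 2)]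
        have hbound : ∑ ε' : Fin n → Bool, (f (Fin.cons true ε') ^ 2 + f (Fin.cons false ε') ^ 2)
            ≤ ∑ ε' : Fin n → Bool, (2 * g ε' ^ 2 + 2 * c 0 ^ 2) := by
          apply Finset.sum_le_sum
          intro ε' _
          have h1 : f (Fin.cons true ε') ^ 2 + f (Fin.cons false ε') ^ 2
              = 2 * g ε' ^ 2 + (f (Fin.cons true ε') - f (Fin.cons false ε')) ^ 2 / 2 := by
            rw [hg ε']; ring
          nlinarith [hd ε']
        have hcard : (Finset.univ : Finset (Fin n → Bool)).card = 2 ^ n := by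
          simp [Fintype.card_fun]
        calc (∑ ε' : Fin n → Bool, (f (Fin.cons true ε') ^ 2 + f (Fin.cons false ε') ^ 2)) / 2 ^ (n+1)
            ≤ (∑ ε' : Fin n → Bool, (2 * g ε' ^ 2 + 2 * c 0 ^ 2)) / 2 ^ (n+1) := by
              apply div_le_div_of_nonneg_right hbound (by positivity)
          _ = (∑ ε', g ε' ^ 2) / 2 ^ n + c 0 ^ 2 := by
              rw [Finset.sum_add_distrib, Finset.sum_const, ← Finset.mul_sum, hcard,
                nsmul_eq_mul]
              push_cast
              field_simp
              ring
      have hih := ih g (fun k => c k.succ) hflipg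
      calc (∑ ε, f ε ^ 2) / 2 ^ (n+1) ≤ (∑ ε', g ε' ^ 2) / 2 ^ n + c 0 ^ 2 := hsq
        _ ≤ ((∑ ε', g ε') / 2 ^ n) ^ 2 + (∑ k : Fin n, c k.succ ^ 2) + c 0 ^ 2 := by linarith
        _ = ((∑ ε, f ε) / 2 ^ (n+1)) ^ 2 + ∑ k : Fin (n+1), c k ^ 2 := by
            rw [hmean, Fin.sum_univ_succ]
            ring

lemma signSum_flip {X : Type*} [NormedAddCommGroup X] [NormedSpace ℝ X]
    {n : ℕ} (x : Fin n → X) (ε : Fin n → Bool) (k : Fin n) :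
    |‖signSum x (Function.update ε k (!(ε k)))‖ - ‖signSum x ε‖| ≤ 2 * ‖x k‖ := by
  have key : signSum x (Function.update ε k (!(ε k))) - signSum x ε
      = ((if !(ε k) then (1:ℝ) else -1) - (if ε k then (1:ℝ) else -1)) • x k := by
    unfold signSum
    rw [← Finset.sum_sub_distrib]
    rw [Finset.sum_eq_single k]
    · rw [Function.update_self, ← sub_smul]
    · intro i _ hik
      rw [Function.update_of_ne hik, sub_self]
    · intro h; exact absurd (Finset.mem_univ k) h
  calc |‖signSum x (Function.update ε k (!(ε k)))‖ - ‖signSum x ε‖|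
      ≤ ‖signSum x (Function.update ε k (!(ε k))) - signSum x ε‖ := abs_norm_sub_norm_le _ _
    _ = ‖((if !(ε k) then (1:ℝ) else -1) - (if ε k then (1:ℝ) else -1)) • x k‖ := by rw [key]
    _ ≤ 2 * ‖x k‖ := by
        rw [norm_smul]
        apply mul_le_mul_of_nonneg_right _ (norm_nonneg _)
        cases h : ε k <;> simp [h] <;> norm_num

lemma sum_rpow_le' {n : ℕ} (a : Fin n → ℝ) (ha : ∀ i, 0 ≤ a i) {p : ℝ} (hp : 1 ≤ p) :
    ∑ i, a i ^ p ≤ (∑ i, a i) ^ p := by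
  classical
  induction (Finset.univ : Finset (Fin n)) using Finset.cons_induction with
  | empty => simp [Real.zero_rpow (by positivity : p ≠ 0)]
  | cons j s hj ih =>
      rw [Finset.sum_cons, Finset.sum_cons]
      have hs : (0:ℝ) ≤ ∑ i ∈ s, a i := Finset.sum_nonneg fun i _ => ha i
      calc a j ^ p + ∑ i ∈ s, a i ^ p ≤ a j ^ p + (∑ i ∈ s, a i) ^ p := by linarith
        _ ≤ (a j + ∑ i ∈ s, a i) ^ p := by
            have := NNReal.add_rpow_le_rpow_add (a j).toNNReal (∑ i ∈ s, a i).toNNReal hp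
            have h1 := (ha j)
            calc a j ^ p + (∑ i ∈ s, a i) ^ p
                = ((a j).toNNReal ^ p + (∑ i ∈ s, a i).toNNReal ^ p : NNReal) := by
                  push_cast [Real.coe_toNNReal _ h1, Real.coe_toNNReal _ hs]
                  rfl
              _ ≤ (((a j).toNNReal + (∑ i ∈ s, a i).toNNReal : NNReal) ^ p : NNReal) := by
                  exact_mod_cast this
              _ = (a j + ∑ i ∈ s, a i) ^ p := by
                  push_cast [Real.coe_toNNReal _ h1, Real.coe_toNNReal _ hs]
                  rfl

/-- From Rademacher type `q` with constant `C_q` (definition (∗)) one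
obtains the variant (∗∗) with second moments, with constant `K₂ · C_q` where `K₂ = 3`. -/
theorem rademacher_type_to_second_moment
    {X : Type*} [NormedAddCommGroup X] [NormedSpace ℝ X]
    (q Cq : ℝ) (hq1 : 1 ≤ q) (hq2 : q ≤ 2) (hCq : 0 < Cq)
    (htype : ∀ (n : ℕ) (x : Fin n → X),
      ((∑ ε : Fin n → Bool, ‖signSum x ε‖ ^ q) / 2 ^ n) ^ (1 / q) ≤
        Cq * (∑ i, ‖x i‖ ^ q) ^ (1 / q)) :
    ∀ (n : ℕ) (x : Fin n → X),
      ((∑ ε : Fin n → Bool, ‖signSum x ε‖ ^ (2 : ℝ)) / 2 ^ n) ^ (1 / (2 : ℝ)) ≤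
        3 * Cq * (∑ i, ‖x i‖ ^ q) ^ (1 / q) := by
  intro n x
  have hq0 : (0:ℝ) < q := lt_of_lt_of_le one_pos hq1
  have hqpow : ∀ a : ℝ, 0 ≤ a → (a ^ q) ^ (1/q) = a := by
    intro a ha
    rw [← Real.rpow_mul ha, mul_one_div, div_self (ne_of_gt hq0), Real.rpow_one]
  set s : ℝ := ∑ i, ‖x i‖ ^ q with hs_def
  have hs_nonneg : 0 ≤ s := Finset.sum_nonneg fun i _ => Real.rpow_nonneg (norm_nonneg _) q
  set T : ℝ := s ^ (1/q) with hT_def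
  have hT_nonneg : 0 ≤ T := Real.rpow_nonneg hs_nonneg _
  by_cases hx : ∀ i, x i = 0
  · have hS0 : ∀ ε : Fin n → Bool, signSum x ε = 0 := by
      intro ε; unfold signSum; simp [hx]
    have hz : (∑ ε : Fin n → Bool, ‖signSum x ε‖ ^ (2:ℝ)) = 0 := by
      apply Finset.sum_eq_zero; intro ε _
      rw [hS0 ε, norm_zero, Real.zero_rpow (by norm_num)]
    rw [hz, zero_div, Real.zero_rpow (by norm_num)]
    positivity
  · push_neg at hx
    obtain ⟨j, hj⟩ := hx
    have hxj : 0 < ‖x j‖ := norm_pos_iff.mpr hj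
    -- Step 1 : Cq ≥ 1
    have hCq1 : 1 ≤ Cq := by
      have h := htype 1 (fun _ => x j)
      have hval : ∀ ε : Fin 1 → Bool, signSum (fun _ => x j) ε
          = (if ε 0 then (1:ℝ) else -1) • x j := by
        intro ε; unfold signSum; rw [Fin.sum_univ_one]
      have hsum1 : (∑ ε : Fin 1 → Bool, ‖signSum (fun _ => x j) ε‖ ^ q)
          = 2 * ‖x j‖ ^ q := by
        rw [Fintype.sum_equiv (Equiv.funUnique (Fin 1) Bool) _
          (fun b => ‖(if b then (1:ℝ) else -1) • x j‖ ^ q) (fun ε => by rw [hval]; rfl)]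
        rw [Fintype.sum_bool]
        simp [norm_smul]
        ring
      rw [hsum1] at h
      have e1 : (2 * ‖x j‖ ^ q / 2 ^ 1 : ℝ) = ‖x j‖ ^ q := by ring
      rw [e1, hqpow _ (norm_nonneg _), Fin.sum_univ_one, hqpow _ (norm_nonneg _)] at h
      nlinarith
    -- Step 2 : variance bound
    have hflip : ∀ (ε : Fin n → Bool) (k : Fin n),
        |(fun ε => ‖signSum x ε‖) (Function.update ε k (!(ε k)))
          - (fun ε => ‖signSum x ε‖) ε| ≤ 2 * ‖x k‖ :=
      fun ε k => signSum_flip x ε k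
    have hvar := cube_var_bound n (fun ε => ‖signSum x ε‖) (fun k => ‖x k‖) hflip
    -- Step 3 : first moment ≤ q-th moment^(1/q) (power mean)
    have hM : (∑ ε : Fin n → Bool, ‖signSum x ε‖) / 2 ^ n
        ≤ ((∑ ε : Fin n → Bool, ‖signSum x ε‖ ^ q) / 2 ^ n) ^ (1/q) := by
      have hw : ∀ ε ∈ (Finset.univ : Finset (Fin n → Bool)), (0:ℝ) ≤ 1 / 2 ^ n :=
        fun _ _ => by positivity
      have hcard : (Finset.univ : Finset (Fin n → Bool)).card = 2 ^ n := by
        simp [Fintype.card_fun]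
      have hw' : ∑ _ε : Fin n → Bool, (1:ℝ) / 2 ^ n = 1 := by
        rw [Finset.sum_const, hcard, nsmul_eq_mul]
        push_cast; field_simp
      have hz : ∀ ε ∈ (Finset.univ : Finset (Fin n → Bool)), (0:ℝ) ≤ ‖signSum x ε‖ :=
        fun _ _ => norm_nonneg _
      have := Real.arith_mean_le_rpow_mean Finset.univ (fun _ => (1:ℝ)/2^n)
        (fun ε => ‖signSum x ε‖) hw hw' hz hq1
      calc (∑ ε : Fin n → Bool, ‖signSum x ε‖) / 2 ^ n
          = ∑ ε : Fin n → Bool, (1:ℝ)/2^n * ‖signSum x ε‖ := by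
            rw [← Finset.mul_sum]; ring
        _ ≤ (∑ ε : Fin n → Bool, (1:ℝ)/2^n * ‖signSum x ε‖ ^ q) ^ (1/q) := this
        _ = ((∑ ε : Fin n → Bool, ‖signSum x ε‖ ^ q) / 2 ^ n) ^ (1/q) := by
            rw [← Finset.mul_sum]; congr 1; ring
    -- Step 4 : type hypothesis
    have htyp := htype n x
    -- Step 5 : ℓq ⊆ ℓ2
    have hl2 : ∑ k, ‖x k‖ ^ 2 ≤ T ^ 2 := by
      have key := sum_rpow_le' (fun i => ‖x i‖ ^ q)
        (fun i => Real.rpow_nonneg (norm_nonneg _) q) (p := 2/q)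
        (by rw [le_div_iff₀ hq0]; linarith)
      have e2 : ∀ i : Fin n, (‖x i‖ ^ q) ^ ((2:ℝ)/q) = ‖x i‖ ^ 2 := by
        intro i
        rw [← Real.rpow_mul (norm_nonneg _)]
        rw [show q * (2/q) = 2 by field_simp]
        rw [show (2:ℝ) = ((2:ℕ):ℝ) by norm_num, Real.rpow_natCast]
      have e3 : (s : ℝ) ^ ((2:ℝ)/q) = T ^ 2 := by
        rw [hT_def, ← Real.rpow_natCast (s ^ (1/q)) 2, ← Real.rpow_mul hs_nonneg]
        congr 1
        push_cast; ring
      calc ∑ k, ‖x k‖ ^ 2 = ∑ k, (‖x k‖ ^ q) ^ ((2:ℝ)/q) := by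
            apply Finset.sum_congr rfl; intro k _; rw [e2 k]
        _ ≤ (∑ k, ‖x k‖ ^ q) ^ ((2:ℝ)/q) := key
        _ = T ^ 2 := e3
    -- Step 6 : assemble the second-moment bound
    have hMnn : 0 ≤ (∑ ε : Fin n → Bool, ‖signSum x ε‖) / 2 ^ n := by
      apply div_nonneg (Finset.sum_nonneg fun ε _ => norm_nonneg _) (by positivity)
    have hM2 : ((∑ ε : Fin n → Bool, ‖signSum x ε‖) / 2 ^ n) ^ 2 ≤ (Cq * T) ^ 2 := by
      apply pow_le_pow_left₀ hMnn (le_trans hM htyp)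
    have hV : (∑ ε : Fin n → Bool, ‖signSum x ε‖ ^ 2) / 2 ^ n ≤ (3 * Cq * T) ^ 2 := by
      have h8 : 0 ≤ T ^ 2 * (8 * Cq ^ 2 - 1) :=
        mul_nonneg (sq_nonneg T) (by nlinarith)
      have : (Cq * T) ^ 2 + T ^ 2 ≤ (3 * Cq * T) ^ 2 := by nlinarith [h8]
      linarith [hvar, hM2, hl2]
    -- Step 7 : take square roots
    have hVnn : 0 ≤ (∑ ε : Fin n → Bool, ‖signSum x ε‖ ^ 2) / 2 ^ n := by
      apply div_nonneg (Finset.sum_nonneg fun ε _ => sq_nonneg _) (by positivity)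
    have hfin : ((∑ ε : Fin n → Bool, ‖signSum x ε‖ ^ 2) / 2 ^ n) ^ (1/(2:ℝ))
        ≤ 3 * Cq * T := by
      have h1 : ((∑ ε : Fin n → Bool, ‖signSum x ε‖ ^ 2) / 2 ^ n) ^ (1/(2:ℝ))
          ≤ ((3 * Cq * T) ^ 2) ^ (1/(2:ℝ)) :=
        Real.rpow_le_rpow hVnn hV (by norm_num)
      have hRnn : 0 ≤ 3 * Cq * T := by positivity
      have h2 : ((3 * Cq * T) ^ 2) ^ (1/(2:ℝ)) = 3 * Cq * T := by
        rw [← Real.rpow_natCast (3 * Cq * T) 2, ← Real.rpow_mul hRnn]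
        norm_num
      rw [h2] at h1
      exact h1
    have hconv : (∑ ε : Fin n → Bool, ‖signSum x ε‖ ^ (2:ℝ))
        = ∑ ε : Fin n → Bool, ‖signSum x ε‖ ^ 2 := by
      apply Finset.sum_congr rfl; intro ε _
      rw [show (2:ℝ) = ((2:ℕ):ℝ) by norm_num, Real.rpow_natCast]
    rw [hconv]
    exact hfin
end

section
/- Let X be a Banach space that is uniformly nonsquare with witness δ ∈ (0,1), set λ := 1 − δ, and let ξ ∈ (0,1) satisfy (1−ξ)/(1 + 2√(2ξ)) ≥ (1/2)·√(2λ² + 2). Then for all x, y ∈ X one has ((‖x+y‖² + ‖x−y‖²)/2)^{1/2} ≤ (1−ξ)·√2·(‖x‖² + ‖y‖²)^{1/2}. -/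
private lemma ns_aux1 (a b A B S ξ s : ℝ) (hS : S = a ^ 2 + b ^ 2) (hs2 : s ^ 2 = 2 * ξ)
    (h1 : 2 * (1 - ξ) ^ 2 * S < (A ^ 2 + B ^ 2) / 2)
    (hA2 : A ^ 2 ≤ (a + b) ^ 2) (hB2 : B ^ 2 ≤ (a + b) ^ 2)
    (hSnn : 0 ≤ S) :
    (a - b) ^ 2 ≤ 2 * s ^ 2 * S := by
  nlinarith [h1, hA2, hB2, mul_nonneg (sq_nonneg ξ) hSnn]

private lemma ns_aux2 (δ ξ s : ℝ)
    (h12 : (1 / 2) * Real.sqrt (2 * (1 - δ) ^ 2 + 2) * (1 + 2 * s) ≤ 1 - ξ)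
    (hcnn : 0 ≤ (1 / 2) * Real.sqrt (2 * (1 - δ) ^ 2 + 2) * (1 + 2 * s)) :
    (1 / 4) * (2 * (1 - δ) ^ 2 + 2) * (1 + 2 * s) ^ 2 ≤ (1 - ξ) ^ 2 := by
  have h := pow_le_pow_left₀ hcnn h12 2
  have hss : Real.sqrt (2 * (1 - δ) ^ 2 + 2) ^ 2 = 2 * (1 - δ) ^ 2 + 2 :=
    Real.sq_sqrt (by positivity)
  nlinarith [h, hss]

private lemma ns_aux3 (δ ξ s S A B : ℝ) (hs0 : 0 ≤ s) (hSnn : 0 ≤ S)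
    (h1 : 2 * (1 - ξ) ^ 2 * S < (A ^ 2 + B ^ 2) / 2)
    (h2 : A ^ 2 + B ^ 2 ≤ 2 * S + 2 * (1 - δ) ^ 2 * S * (1 + s) ^ 2)
    (h3S : (1 / 4) * (2 * (1 - δ) ^ 2 + 2) * (1 + 2 * s) ^ 2 * S ≤ (1 - ξ) ^ 2 * S) :
    False := by
  nlinarith [mul_nonneg (mul_nonneg hSnn hs0) hs0, mul_nonneg hSnn hs0,
    mul_nonneg (mul_nonneg hSnn (sq_nonneg (1 - δ))) hs0,
    mul_nonneg (mul_nonneg (mul_nonneg hSnn (sq_nonneg (1 - δ))) hs0) hs0]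

/-- In a Banach space that is uniformly nonsquare with witness
`δ ∈ (0,1)`, `λ := 1 - δ`, and `ξ ∈ (0,1)` with
`(1-ξ)/(1 + 2√(2ξ)) ≥ (1/2)·√(2λ²+2)`, one has
`√((‖x+y‖² + ‖x-y‖²)/2) ≤ (1-ξ)·√2·√(‖x‖² + ‖y‖²)` for all `x, y`. -/
theorem nonsquare_two_point_type_bound
    {X : Type*} [NormedAddCommGroup X] [NormedSpace ℝ X] [CompleteSpace X]
    (δ : ℝ) (hδ0 : 0 < δ) (hδ1 : δ < 1)
    (hns : ∀ x y : X, min (‖x - y‖ / 2) (‖x + y‖ / 2) ≤ (1 - δ) * max ‖x‖ ‖y‖)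
    (ξ : ℝ) (hξ0 : 0 < ξ) (hξ1 : ξ < 1)
    (hξ : (1 - ξ) / (1 + 2 * Real.sqrt (2 * ξ)) ≥
      (1 / 2) * Real.sqrt (2 * (1 - δ) ^ 2 + 2)) :
    ∀ x y : X,
      Real.sqrt ((‖x + y‖ ^ 2 + ‖x - y‖ ^ 2) / 2) ≤
        (1 - ξ) * Real.sqrt 2 * Real.sqrt (‖x‖ ^ 2 + ‖y‖ ^ 2) := by
  intro x y
  by_contra hcon
  push_neg at hcon
  set a := ‖x‖ with ha
  set b := ‖y‖ with hb
  set A := ‖x + y‖ with hA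
  set B := ‖x - y‖ with hB
  set S := a ^ 2 + b ^ 2 with hS
  set s := Real.sqrt (2 * ξ) with hsdef
  have hξ1' : (0:ℝ) < 1 - ξ := by linarith
  have hs0 : 0 ≤ s := Real.sqrt_nonneg _
  have hs2 : s ^ 2 = 2 * ξ := Real.sq_sqrt (by linarith)
  have hSnn : 0 ≤ S := by positivity
  have hsqS : Real.sqrt S ^ 2 = S := Real.sq_sqrt hSnn
  have hsq2 : Real.sqrt 2 ^ 2 = 2 := Real.sq_sqrt (by norm_num)
  have hsqSnn : 0 ≤ Real.sqrt S := Real.sqrt_nonneg _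
  have hsq2nn : 0 ≤ Real.sqrt 2 := Real.sqrt_nonneg _
  have hann : 0 ≤ a := norm_nonneg _
  have hbnn : 0 ≤ b := norm_nonneg _
  have hAnn : 0 ≤ A := norm_nonneg _
  have hBnn : 0 ≤ B := norm_nonneg _
  have hAab : A ≤ a + b := norm_add_le x y
  have hBab : B ≤ a + b := norm_sub_le x y
  have hlam : (0:ℝ) ≤ 1 - δ := by linarith
  -- squared form of the negated conclusion
  have h1 : 2 * (1 - ξ) ^ 2 * S < (A ^ 2 + B ^ 2) / 2 := by
    have hrhs : 0 ≤ (1 - ξ) * Real.sqrt 2 * Real.sqrt S := by positivity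
    have h0 := (Real.lt_sqrt hrhs).mp hcon
    calc 2 * (1 - ξ) ^ 2 * S = ((1 - ξ) * Real.sqrt 2 * Real.sqrt S) ^ 2 := by
          rw [mul_pow, mul_pow, hsq2, hsqS]; ring
      _ < (A ^ 2 + B ^ 2) / 2 := h0
  have hA2 : A ^ 2 ≤ (a + b) ^ 2 := pow_le_pow_left₀ hAnn hAab 2
  have hB2 : B ^ 2 ≤ (a + b) ^ 2 := pow_le_pow_left₀ hBnn hBab 2
  -- a and b are nearly equal
  have h5a : (a - b) ^ 2 ≤ 2 * s ^ 2 * S := ns_aux1 a b A B S ξ s hS hs2 h1 hA2 hB2 hSnn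
  have h5 : (a - b) ^ 2 ≤ (s * (Real.sqrt 2 * Real.sqrt S)) ^ 2 := by
    have he : (s * (Real.sqrt 2 * Real.sqrt S)) ^ 2 = 2 * s ^ 2 * S := by
      rw [mul_pow, mul_pow, hsq2, hsqS]; ring
    rw [he]; exact h5a
  have habs : |a - b| ≤ s * (Real.sqrt 2 * Real.sqrt S) := by
    have h6 : 0 ≤ s * (Real.sqrt 2 * Real.sqrt S) := by positivity
    calc |a - b| = Real.sqrt ((a - b) ^ 2) := (Real.sqrt_sq_eq_abs _).symm
      _ ≤ Real.sqrt ((s * (Real.sqrt 2 * Real.sqrt S)) ^ 2) := Real.sqrt_le_sqrt h5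
      _ = s * (Real.sqrt 2 * Real.sqrt S) := Real.sqrt_sq h6
  have habS : a + b ≤ Real.sqrt 2 * Real.sqrt S := by
    have h7 : (a + b) ^ 2 ≤ (Real.sqrt 2 * Real.sqrt S) ^ 2 := by
      rw [mul_pow, hsq2, hsqS]; linarith [sq_nonneg (a - b), hS]
    calc a + b = Real.sqrt ((a + b) ^ 2) := (Real.sqrt_sq (by linarith)).symm
      _ ≤ Real.sqrt ((Real.sqrt 2 * Real.sqrt S) ^ 2) := Real.sqrt_le_sqrt h7
      _ = Real.sqrt 2 * Real.sqrt S := Real.sqrt_sq (by positivity)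
  -- bound on max of norms
  have hM : max a b ≤ Real.sqrt 2 * Real.sqrt S * (1 + s) / 2 := by
    have h8 : max a b ≤ (a + b) / 2 + |a - b| / 2 := by
      rcases le_total a b with h | h
      · rw [max_eq_right h]
        have h9 := le_abs_self (b - a)
        rw [abs_sub_comm] at h9
        linarith
      · rw [max_eq_left h]
        have h9 := le_abs_self (a - b)
        linarith
    calc max a b ≤ (a + b) / 2 + |a - b| / 2 := h8
      _ ≤ Real.sqrt 2 * Real.sqrt S / 2 + s * (Real.sqrt 2 * Real.sqrt S) / 2 := by
          linarith
      _ = Real.sqrt 2 * Real.sqrt S * (1 + s) / 2 := by ring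
  -- nonsquareness bound
  have hmin : min A B ≤ (1 - δ) * (Real.sqrt 2 * Real.sqrt S) * (1 + s) := by
    have h9 := hns x y
    have h10 : min (B / 2) (A / 2) = min A B / 2 := by
      rw [min_div_div_right (by norm_num : (0:ℝ) ≤ 2), min_comm]
    rw [h10] at h9
    have h11 : (1 - δ) * max a b ≤ (1 - δ) * (Real.sqrt 2 * Real.sqrt S * (1 + s) / 2) :=
      mul_le_mul_of_nonneg_left hM hlam
    calc min A B = 2 * (min A B / 2) := by ring
      _ ≤ 2 * ((1 - δ) * (Real.sqrt 2 * Real.sqrt S * (1 + s) / 2)) := by linarith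
      _ = (1 - δ) * (Real.sqrt 2 * Real.sqrt S) * (1 + s) := by ring
  -- squared bound on the sum
  have h2 : A ^ 2 + B ^ 2 ≤ 2 * S + 2 * (1 - δ) ^ 2 * S * (1 + s) ^ 2 := by
    have hRnn : 0 ≤ (1 - δ) * (Real.sqrt 2 * Real.sqrt S) * (1 + s) := by positivity
    have hRsq : ((1 - δ) * (Real.sqrt 2 * Real.sqrt S) * (1 + s)) ^ 2
        = 2 * (1 - δ) ^ 2 * S * (1 + s) ^ 2 := by
      rw [mul_pow, mul_pow, mul_pow, hsq2, hsqS]; ring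
    have hab2 : (a + b) ^ 2 ≤ 2 * S := by linarith [sq_nonneg (a - b), hS]
    rcases le_total A B with h | h
    · have hAm : A ≤ (1 - δ) * (Real.sqrt 2 * Real.sqrt S) * (1 + s) := by
        rw [min_eq_left h] at hmin; exact hmin
      have h12 := pow_le_pow_left₀ hAnn hAm 2
      rw [hRsq] at h12
      linarith [hB2]
    · have hBm : B ≤ (1 - δ) * (Real.sqrt 2 * Real.sqrt S) * (1 + s) := by
        rw [min_eq_right h] at hmin; exact hmin
      have h12 := pow_le_pow_left₀ hBnn hBm 2
      rw [hRsq] at h12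
      linarith [hA2]
  -- squared form of the hypothesis on ξ
  have h3 : (1 / 4) * (2 * (1 - δ) ^ 2 + 2) * (1 + 2 * s) ^ 2 ≤ (1 - ξ) ^ 2 := by
    have hden : (0:ℝ) < 1 + 2 * s := by linarith
    have h12 : (1 / 2) * Real.sqrt (2 * (1 - δ) ^ 2 + 2) * (1 + 2 * s) ≤ 1 - ξ := by
      have h13 := (le_div_iff₀ hden).mp hξ
      linarith
    exact ns_aux2 δ ξ s h12 (by positivity)
  have h3S := mul_le_mul_of_nonneg_right h3 hSnn
  exact ns_aux3 δ ξ s S A B hs0 hSnn h1 h2 h3S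
end

section
/- Let η : (0,2] → (0,1] and b > 0. Define η₁ : [0,∞) → [0,1] by η₁(0) := 0 and η₁(ε) := sup{η(ε') : 0 < ε' ≤ min{2, ε}} for ε > 0; define η̃(ε) := (1/2)·∫₀^ε η₁(t) dt and γ(ε) := (b/2)·η̃(4ε/b). Let γ⁻¹ : [0,∞) → [0,∞) be a two-sided inverse of γ on [0,∞) (γ(γ⁻¹(s)) = s and γ⁻¹(γ(s)) = s for all s ≥ 0). Define q̃(ε) := γ⁻¹(3ε) + ε and ξ(t) := (t/12)·η(min{2, t/b}). Then for all p ∈ ℕ, ε > 0 and t ≥ 0: if t < ξ^p(ε) then q̃^p(t) < ε. -/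
/-!
`η₁` is nonnegative and nondecreasing with `η₁(u) ≥ η(min 2 u)`, so `η̃` and `γ` are nondecreasing
and `η̃(2u) ≥ (1/2)·∫ᵤ^{2u} η₁ ≥ (u/2)·η(min 2 u)`; unwinding the scalings gives `3ξ(ε) ≤ γ(ε/2)`.
Hence if `0 ≤ t < ξ(ε)` then `t ≤ ε/12` and `γ(γ⁻¹(3t)) = 3t < γ(ε/2) ≤ γ(ε - t)`, so
`q̃(t) = γ⁻¹(3t) + t < ε`. The claim for `p` iterates follows by induction, peeling off the
innermost `ξ`.
-/

/-- `η₁(ε) := sup {η(ε') : 0 < ε' ≤ min 2 ε}` for `ε > 0`, and `η₁(ε) := 0` otherwise. -/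
noncomputable def eta1 (η : ℝ → ℝ) (ε : ℝ) : ℝ :=
  if 0 < ε then sSup {y : ℝ | ∃ ε' : ℝ, 0 < ε' ∧ ε' ≤ min 2 ε ∧ y = η ε'} else 0

/-- `η̃(ε) := (1/2)·∫₀^ε η₁(t) dt`. -/
noncomputable def etaTilde (η : ℝ → ℝ) (ε : ℝ) : ℝ :=
  (1 / 2) * ∫ t in (0 : ℝ)..ε, eta1 η t

/-- `γ(ε) := (b/2)·η̃(4ε/b)`. -/
noncomputable def gammaFun (η : ℝ → ℝ) (b : ℝ) (ε : ℝ) : ℝ :=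
  (b / 2) * etaTilde η (4 * ε / b)

/-- `ξ(t) := (t/12)·η(min{2, t/b})`. -/
noncomputable def xiFun (η : ℝ → ℝ) (b : ℝ) (t : ℝ) : ℝ :=
  t / 12 * η (min 2 (t / b))

open Set

theorem iterate_lt_of_lt_iterate {α : Type*} [LT α] {f g : α → α} {s u : Set α}
    (hf : MapsTo f s s) (hg : MapsTo g u u) (h : ∀ ε ∈ s, ∀ t ∈ u, t < f ε → g t < ε) :
    ∀ (p : ℕ), ∀ ε ∈ s, ∀ t ∈ u, t < f^[p] ε → g^[p] t < ε := by
  intro p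
  induction p with
  | zero => exact fun _ _ _ _ hlt => hlt
  | succ n ih =>
    intro ε hε t ht hlt
    rw [Function.iterate_succ_apply] at hlt
    rw [Function.iterate_succ_apply']
    exact h ε hε _ (hg.iterate n ht) (ih (f ε) (hf hε) t ht hlt)

section Eta

variable {η : ℝ → ℝ}

theorem eta1_of_pos {ε : ℝ} (hε : 0 < ε) : eta1 η ε = sSup (η '' Ioc 0 (min 2 ε)) := by
  rw [eta1, if_pos hε]
  congr 1
  ext y
  simp only [mem_ofPred_eq, mem_image, mem_Ioc]
  exact ⟨fun ⟨x, hx0, hx, hy⟩ => ⟨x, ⟨hx0, hx⟩, hy.symm⟩,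
    fun ⟨x, ⟨hx0, hx⟩, hy⟩ => ⟨x, hx0, hx, hy.symm⟩⟩

theorem eta1_nonneg (hη : ∀ ε ∈ Ioc 0 2, 0 ≤ η ε) (ε : ℝ) : 0 ≤ eta1 η ε := by
  by_cases hε : 0 < ε
  · rw [eta1_of_pos hε]
    refine Real.sSup_nonneg ?_
    rintro _ ⟨x, ⟨hx0, hx⟩, rfl⟩
    exact hη x ⟨hx0, hx.trans (min_le_left _ _)⟩
  · rw [eta1, if_neg hε]

theorem bddAbove_image_Ioc_min (hη : BddAbove (η '' Ioc 0 2)) (ε : ℝ) :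
    BddAbove (η '' Ioc 0 (min 2 ε)) :=
  hη.mono (image_mono (Ioc_subset_Ioc_right (min_le_left _ _)))

theorem le_eta1 (hη : BddAbove (η '' Ioc 0 2)) {ε : ℝ} (hε : 0 < ε) :
    η (min 2 ε) ≤ eta1 η ε := by
  rw [eta1_of_pos hε]
  exact le_csSup (bddAbove_image_Ioc_min hη ε) ⟨_, ⟨lt_min two_pos hε, le_rfl⟩, rfl⟩

variable (hη₀ : ∀ ε ∈ Ioc 0 2, 0 ≤ η ε) (hη : BddAbove (η '' Ioc 0 2))
include hη₀ hη

theorem eta1_mono : Monotone (eta1 η) := by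
  intro x y hxy
  by_cases hx : 0 < x
  · rw [eta1_of_pos hx, eta1_of_pos (hx.trans_le hxy)]
    exact csSup_le_csSup (bddAbove_image_Ioc_min hη y)
      ((nonempty_Ioc.2 (lt_min two_pos hx)).image η)
      (image_mono (Ioc_subset_Ioc_right (min_le_min_left 2 hxy)))
  · rw [eta1, if_neg hx]
    exact eta1_nonneg hη₀ y

theorem eta1_intervalIntegrable (a c : ℝ) : IntervalIntegrable (eta1 η) MeasureTheory.volume a c :=
  (eta1_mono hη₀ hη).intervalIntegrable

theorem etaTilde_mono : Monotone (etaTilde η) := by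
  intro x y hxy
  have hint := eta1_intervalIntegrable hη₀ hη 0
  have hdiff : (∫ t in (0 : ℝ)..y, eta1 η t) - ∫ t in (0 : ℝ)..x, eta1 η t
      = ∫ t in x..y, eta1 η t :=
    intervalIntegral.integral_interval_sub_left (hint y) (hint x)
  have hnonneg : 0 ≤ ∫ t in x..y, eta1 η t :=
    intervalIntegral.integral_nonneg hxy fun t _ => eta1_nonneg hη₀ t
  unfold etaTilde
  linarith

theorem gammaFun_mono {b : ℝ} (hb : 0 < b) : Monotone (gammaFun η b) := by
  intro x y hxy
  unfold gammaFun
  gcongr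
  exact etaTilde_mono hη₀ hη (by gcongr)

theorem mul_eta_le_etaTilde_two_mul {u : ℝ} (hu : 0 < u) :
    u * η (min 2 u) / 2 ≤ etaTilde η (2 * u) := by
  have hint := eta1_intervalIntegrable hη₀ hη
  have hlower : u * η (min 2 u) ≤ ∫ t in u..(2 * u), eta1 η t := by
    have := intervalIntegral.integral_mono_on (b := 2 * u) (by linarith)
      intervalIntegrable_const (hint _ _)
      fun s hs => (le_eta1 hη hu).trans (eta1_mono hη₀ hη hs.1)
    rwa [intervalIntegral.integral_const, smul_eq_mul, show 2 * u - u = u by ring] at this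
  have hsub : ∫ t in u..(2 * u), eta1 η t ≤ ∫ t in (0 : ℝ)..(2 * u), eta1 η t :=
    intervalIntegral.integral_mono_interval hu.le (by linarith) le_rfl
      (MeasureTheory.ae_of_all _ fun t => eta1_nonneg hη₀ t) (hint _ _)
  unfold etaTilde
  linarith

theorem three_mul_xiFun_le_gammaFun {b : ℝ} (hb : 0 < b) {ε : ℝ} (hε : 0 < ε) :
    3 * xiFun η b ε ≤ gammaFun η b (ε / 2) := by
  have key := mul_eta_le_etaTilde_two_mul hη₀ hη (div_pos hε hb)
  have harg : 4 * (ε / 2) / b = 2 * (ε / b) := by ring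
  have hscale : b / 2 * (ε / b * η (min 2 (ε / b)) / 2) = 3 * xiFun η b ε := by
    unfold xiFun; field_simp; ring
  unfold gammaFun
  rw [harg, ← hscale]
  gcongr

end Eta

theorem xi_iterate_qtilde_iterate_general
    (η : ℝ → ℝ) (hη_range : ∀ ε : ℝ, 0 < ε → ε ≤ 2 → 0 < η ε ∧ η ε ≤ 1)
    (b : ℝ) (hb : 0 < b)
    (γinv : ℝ → ℝ) (hγinv_nonneg : ∀ s : ℝ, 0 ≤ s → 0 ≤ γinv s)
    (hγinv_right : ∀ s : ℝ, 0 ≤ s → gammaFun η b (γinv s) = s)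
    (qt : ℝ → ℝ) (hqt : ∀ ε : ℝ, qt ε = γinv (3 * ε) + ε) :
    ∀ (p : ℕ) (ε t : ℝ), 0 < ε → 0 ≤ t → t < (xiFun η b)^[p] ε →
      qt^[p] t < ε := by
  have hη₀ : ∀ ε ∈ Ioc 0 2, 0 ≤ η ε := fun ε hε => (hη_range ε hε.1 hε.2).1.le
  have hη : BddAbove (η '' Ioc 0 2) := ⟨1, by rintro _ ⟨ε, hε, rfl⟩; exact (hη_range ε hε.1 hε.2).2⟩
  have hm : ∀ ε, 0 < ε → 0 < η (min 2 (ε / b)) ∧ η (min 2 (ε / b)) ≤ 1 := fun ε hε =>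
    hη_range _ (lt_min two_pos (div_pos hε hb)) (min_le_left _ _)
  have hxi_pos : MapsTo (xiFun η b) (Ioi 0) (Ioi 0) := fun ε (hε : 0 < ε) =>
    mul_pos (by positivity) (hm ε hε).1
  have hqt_nonneg : MapsTo qt (Ici 0) (Ici 0) := fun t (ht : 0 ≤ t) => by
    simp only [mem_Ici, hqt]
    linarith [hγinv_nonneg (3 * t) (by linarith)]
  refine fun p ε t hε ht => iterate_lt_of_lt_iterate hxi_pos hqt_nonneg ?_ p ε hε t ht
  intro ε (hε : 0 < ε) t (ht : 0 ≤ t) hlt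
  have hγ := gammaFun_mono hη₀ hη hb
  have hxi_le : xiFun η b ε ≤ ε / 12 := by
    unfold xiFun
    nlinarith [hm ε hε]
  have h3t : gammaFun η b (γinv (3 * t)) < gammaFun η b (ε - t) := by
    rw [hγinv_right (3 * t) (by linarith)]
    linarith [three_mul_xiFun_le_gammaFun hη₀ hη hb hε, hγ (show ε / 2 ≤ ε - t by linarith)]
  rw [hqt]
  linarith [hγ.reflect_lt h3t]

/-- Lemma on iterates of `q̃`: if `t < ξ^p(ε)` then `q̃^p(t) < ε`,
where `q̃(ε) := γ⁻¹(3ε) + ε`. -/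
theorem xi_iterate_qtilde_iterate
    (η : ℝ → ℝ) (hη_range : ∀ ε : ℝ, 0 < ε → ε ≤ 2 → 0 < η ε ∧ η ε ≤ 1)
    (b : ℝ) (hb : 0 < b)
    (γinv : ℝ → ℝ) (hγinv_nonneg : ∀ s : ℝ, 0 ≤ s → 0 ≤ γinv s)
    (hγinv_right : ∀ s : ℝ, 0 ≤ s → gammaFun η b (γinv s) = s)
    (hγinv_left : ∀ s : ℝ, 0 ≤ s → γinv (gammaFun η b s) = s)
    (qt : ℝ → ℝ) (hqt : ∀ ε : ℝ, qt ε = γinv (3 * ε) + ε) :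
    ∀ (p : ℕ) (ε t : ℝ), 0 < ε → 0 ≤ t → t < (xiFun η b)^[p] ε →
      qt^[p] t < ε :=
  xi_iterate_qtilde_iterate_general η hη_range b hb γinv hγinv_nonneg hγinv_right qt hqt
end

section
/- Let H be a real Hilbert space, let C ⊆ H be a nonempty bounded convex set, and let T : C → C be nonexpansive. Then for every x ∈ C and every integer n ≥ 1, ‖(1/n)·Σᵢ₌₀^{n−1} Tⁱx − T((1/n)·Σᵢ₌₀^{n−1} Tⁱx)‖ ≤ diam(C)/√n, where diam(C) := sup{‖u − v‖ : u, v ∈ C}. -/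
/-!
Let `aᵢ = Tⁱx` and let `z` be their mean. The parallel axis identity in a Hilbert space gives
`∑ᵢ ‖aᵢ - Tz‖² = ∑ᵢ ‖aᵢ - z‖² + n‖z - Tz‖²`. Since `z ∈ C` by convexity, nonexpansiveness gives
`‖aᵢ₊₁ - Tz‖ ≤ ‖aᵢ - z‖`, so the left side is at most `‖a₀ - Tz‖² + ∑_{i < n-1} ‖aᵢ - z‖²`.
Hence `n‖z - Tz‖² ≤ ‖x - Tz‖² ≤ diam(C)²`.
-/

open Finset

section Centroid

variable {ι E : Type*}

theorem Finset.sum_sub_inv_card_smul_sum {k : Type*} [DivisionRing k] [CharZero k]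
    [AddCommGroup E] [Module k E] (s : Finset ι) (a : ι → E) :
    ∑ i ∈ s, (a i - (#s : k)⁻¹ • ∑ j ∈ s, a j) = 0 := by
  rcases s.eq_empty_or_nonempty with rfl | hs
  · simp
  rw [sum_sub_distrib, sum_const, ← Nat.cast_smul_eq_nsmul k, smul_smul,
    mul_inv_cancel₀ (by simpa using hs.ne_empty), one_smul, sub_self]

theorem Finset.sum_norm_sub_sq_eq_sum_norm_sub_centroid_sq_add [NormedAddCommGroup E]
    [InnerProductSpace ℝ E] (s : Finset ι) (a : ι → E) (w : E) :
    ∑ i ∈ s, ‖a i - w‖ ^ 2 =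
      ∑ i ∈ s, ‖a i - (#s : ℝ)⁻¹ • ∑ j ∈ s, a j‖ ^ 2 +
        #s * ‖(#s : ℝ)⁻¹ • ∑ j ∈ s, a j - w‖ ^ 2 := by
  set z := (#s : ℝ)⁻¹ • ∑ j ∈ s, a j
  have hsplit : ∀ i,
      ‖a i - w‖ ^ 2 = ‖a i - z‖ ^ 2 + 2 * inner ℝ (a i - z) (z - w) + ‖z - w‖ ^ 2 := fun i => by
    rw [← norm_add_sq_real, sub_add_sub_cancel]
  have hcross : ∑ i ∈ s, inner ℝ (a i - z) (z - w) = 0 := by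
    rw [← sum_inner, s.sum_sub_inv_card_smul_sum, inner_zero_left]
  simp only [hsplit, sum_add_distrib, ← mul_sum, hcross, sum_const, nsmul_eq_mul]
  ring

end Centroid

section CesaroMean

variable {E : Type*}

noncomputable def cesaroMean [AddCommGroup E] [Module ℝ E] (T : E → E) (n : ℕ) (x : E) : E :=
  (1 / (n : ℝ)) • ∑ i ∈ range n, T^[i] x

theorem Convex.cesaroMean_mem [AddCommGroup E] [Module ℝ E] {C : Set E} (hC : Convex ℝ C)
    {T : E → E} (hT : Set.MapsTo T C C) {x : E} (hx : x ∈ C) {n : ℕ} (hn : n ≠ 0) :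
    cesaroMean T n x ∈ C := by
  rw [cesaroMean, smul_sum]
  refine hC.sum_mem (fun _ _ => by positivity) ?_ fun i _ => hT.iterate i hx
  rw [sum_const, card_range, nsmul_eq_mul, mul_one_div_cancel (Nat.cast_ne_zero.mpr hn)]

variable [NormedAddCommGroup E] {C : Set E} {T : E → E}

theorem sum_range_succ_norm_iterate_sub_sq_le (hT : Set.MapsTo T C C)
    (hTne : ∀ x ∈ C, ∀ y ∈ C, ‖T x - T y‖ ≤ ‖x - y‖) {x y : E} (hx : x ∈ C) (hy : y ∈ C)
    (n : ℕ) :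
    ∑ i ∈ range (n + 1), ‖T^[i] x - T y‖ ^ 2 ≤
      ‖x - T y‖ ^ 2 + ∑ i ∈ range n, ‖T^[i] x - y‖ ^ 2 := by
  rw [sum_range_succ', add_comm, Function.iterate_zero_apply]
  gcongr with i
  rw [Function.iterate_succ_apply']
  exact hTne _ (hT.iterate i hx) _ hy

theorem natCast_mul_norm_cesaroMean_sub_sq_le [InnerProductSpace ℝ E] (hC : Convex ℝ C)
    (hT : Set.MapsTo T C C) (hTne : ∀ x ∈ C, ∀ y ∈ C, ‖T x - T y‖ ≤ ‖x - y‖) {x : E}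
    (hx : x ∈ C) {n : ℕ} (hn : n ≠ 0) :
    n * ‖cesaroMean T n x - T (cesaroMean T n x)‖ ^ 2 ≤ ‖x - T (cesaroMean T n x)‖ ^ 2 := by
  set z := cesaroMean T n x
  have hz : z ∈ C := hC.cesaroMean_mem hT hx hn
  have hpa : ∑ i ∈ range n, ‖T^[i] x - T z‖ ^ 2 =
      ∑ i ∈ range n, ‖T^[i] x - z‖ ^ 2 + n * ‖z - T z‖ ^ 2 := by
    have h := (range n).sum_norm_sub_sq_eq_sum_norm_sub_centroid_sq_add (T^[·] x) (T z)
    rw [card_range, ← one_div] at h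
    exact h
  obtain ⟨m, rfl⟩ : ∃ m, n = m + 1 := ⟨n - 1, by omega⟩
  have hshift := sum_range_succ_norm_iterate_sub_sq_le hT hTne hx hz m
  have hlast := sum_range_succ (fun i => ‖T^[i] x - z‖ ^ 2) m
  linarith [sq_nonneg ‖T^[m] x - z‖]

end CesaroMean

theorem le_div_sqrt_of_mul_sq_le {t d r : ℝ} (ht : 0 ≤ t) (hd : 0 ≤ d) (hr : 0 < r)
    (h : r * t ^ 2 ≤ d ^ 2) : t ≤ d / √r := by
  rw [le_div_iff₀ (Real.sqrt_pos.mpr hr), ← pow_le_pow_iff_left₀ (by positivity) hd two_ne_zero,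
    mul_pow, Real.sq_sqrt hr.le]
  linarith

theorem cesaro_asymptotic_regularity_hilbert_general
    {H : Type*} [NormedAddCommGroup H] [InnerProductSpace ℝ H]
    (C : Set H) (hCbdd : Bornology.IsBounded C)
    (hCcv : Convex ℝ C)
    (T : H → H) (hTmaps : ∀ x ∈ C, T x ∈ C)
    (hTne : ∀ x ∈ C, ∀ y ∈ C, ‖T x - T y‖ ≤ ‖x - y‖) :
    ∀ x ∈ C, ∀ n : ℕ, 1 ≤ n →
      ‖(1 / (n : ℝ)) • ∑ i ∈ Finset.range n, T^[i] x -
          T ((1 / (n : ℝ)) • ∑ i ∈ Finset.range n, T^[i] x)‖ ≤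
        Metric.diam C / Real.sqrt n := by
  intro x hx n hn
  have hn0 : n ≠ 0 := Nat.one_le_iff_ne_zero.mp hn
  have hTz : T (cesaroMean T n x) ∈ C := hTmaps _ (hCcv.cesaroMean_mem hTmaps hx hn0)
  have hdiam : ‖x - T (cesaroMean T n x)‖ ≤ Metric.diam C := by
    rw [← dist_eq_norm]
    exact Metric.dist_le_diam_of_mem hCbdd hx hTz
  refine le_div_sqrt_of_mul_sq_le (norm_nonneg _) Metric.diam_nonneg (by positivity) ?_
  calc (n : ℝ) * ‖cesaroMean T n x - T (cesaroMean T n x)‖ ^ 2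
      ≤ ‖x - T (cesaroMean T n x)‖ ^ 2 :=
        natCast_mul_norm_cesaroMean_sub_sq_le hCcv hTmaps hTne hx hn0
    _ ≤ Metric.diam C ^ 2 := by gcongr

/-- quadratic rate of asymptotic regularity for Cesàro means of a
nonexpansive map on a nonempty bounded convex subset of a real Hilbert space:
`‖(1/n)∑ Tⁱx − T((1/n)∑ Tⁱx)‖ ≤ diam(C)/√n`. -/
theorem cesaro_asymptotic_regularity_hilbert
    {H : Type*} [NormedAddCommGroup H] [InnerProductSpace ℝ H]
    (C : Set H) (hCne : C.Nonempty) (hCbdd : Bornology.IsBounded C)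
    (hCcv : Convex ℝ C)
    (T : H → H) (hTmaps : ∀ x ∈ C, T x ∈ C)
    (hTne : ∀ x ∈ C, ∀ y ∈ C, ‖T x - T y‖ ≤ ‖x - y‖) :
    ∀ x ∈ C, ∀ n : ℕ, 1 ≤ n →
      ‖(1 / (n : ℝ)) • ∑ i ∈ Finset.range n, T^[i] x -
          T ((1 / (n : ℝ)) • ∑ i ∈ Finset.range n, T^[i] x)‖ ≤
        Metric.diam C / Real.sqrt n :=
  cesaro_asymptotic_regularity_hilbert_general C hCbdd hCcv T hTmaps hTne
end
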